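/- Let α : ℝ → ℝ be measurable with |α| ≤ M, supported in [−N, N], let σ² ≥ c > 0 on ℝ, and fix δ = c/(4M). Define the odd function γ by γ(u) = M u/δ on [0, δ], γ(u) = M on [δ, N], γ(u) = M(N + 1 − u) on [N, N+1], γ = 0 on [N+1, ∞), and γ(u) = −γ(−u) for u < 0 (where N ≥ δ). Then for almost every u ∈ ℝ: 2·((γ(u) − α(u))/σ(u)²)·u + 1 ≥ 1/2. -/

import Mathlib

/-!
The cutoff `γ` is odd and nonnegative on `[0, ∞)`, so `γ(u)·u ≥ 0` everywhere; it equals `M ≥ |α|`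
on `δ ≤ |u| ≤ N`, and `α` vanishes for `|u| > N`, so `(γ(u) − α(u))·u ≥ 0` once `|u| ≥ δ`.
For `|u| < δ` only `−α(u)·u ≥ −Mδ = −c/4` is left, and dividing by `σ(u)² ≥ c` gives the
bound at every `u`, not just almost every.
-/

open MeasureTheory

lemma Function.Odd.apply_mul_self_eq_apply_abs_mul_abs {γ : ℝ → ℝ} (hγ : Function.Odd γ) (u : ℝ) :
    γ u * u = γ |u| * |u| := by
  rcases abs_choice u with h | h <;> rw [h]
  rw [hγ.eq, neg_mul_neg]

lemma Function.Odd.apply_mul_self_nonneg {γ : ℝ → ℝ} (hγ : Function.Odd γ)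
    (hnn : ∀ v, 0 ≤ v → 0 ≤ γ v) (u : ℝ) : 0 ≤ γ u * u := by
  rw [hγ.apply_mul_self_eq_apply_abs_mul_abs]
  exact mul_nonneg (hnn _ (abs_nonneg u)) (abs_nonneg u)

lemma neg_mul_le_sub_mul_of_abs_le {g a u M δ : ℝ} (hδ : 0 ≤ δ) (hg : 0 ≤ g * u)
    (ha : |a| ≤ M) (hfar : δ ≤ |u| → 0 ≤ (g - a) * u) : -(M * δ) ≤ (g - a) * u := by
  have hM : 0 ≤ M := (abs_nonneg a).trans ha
  rcases le_or_gt δ |u| with hu | hu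
  · nlinarith [hfar hu]
  · have hau : |a * u| ≤ M * δ := by
      rw [abs_mul]; exact mul_le_mul ha hu.le (abs_nonneg u) hM
    rw [sub_mul]
    linarith [le_abs_self (a * u)]

section Cutoff

variable {γ : ℝ → ℝ} {M N δ : ℝ}

lemma cutoff_nonneg (hM : 0 ≤ M) (hδ : 0 ≤ δ)
    (hγ1 : ∀ u ∈ Set.Icc (0:ℝ) δ, γ u = M * u / δ)
    (hγ2 : ∀ u ∈ Set.Icc δ N, γ u = M)
    (hγ3 : ∀ u ∈ Set.Icc N (N + 1), γ u = M * (N + 1 - u))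
    (hγ4 : ∀ u : ℝ, N + 1 ≤ u → γ u = 0) {v : ℝ} (hv : 0 ≤ v) : 0 ≤ γ v := by
  rcases le_or_gt v δ with hvδ | hδv
  · rw [hγ1 v ⟨hv, hvδ⟩]; positivity
  rcases le_or_gt v N with hvN | hNv
  · rw [hγ2 v ⟨hδv.le, hvN⟩]; exact hM
  rcases le_or_gt v (N + 1) with hvN1 | hN1v
  · rw [hγ3 v ⟨hNv.le, hvN1⟩]; exact mul_nonneg hM (by linarith)
  · rw [hγ4 v hN1v.le]

lemma cutoff_sub_mul_nonneg (hγodd : Function.Odd γ) (hnn : ∀ v, 0 ≤ v → 0 ≤ γ v)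
    (hγ2 : ∀ u ∈ Set.Icc δ N, γ u = M) {a u : ℝ} (ha : |a| ≤ M) (hsupp : N < |u| → a = 0)
    (hu : δ ≤ |u|) : 0 ≤ (γ u - a) * u := by
  rcases le_or_gt |u| N with huN | hNu
  · have hau : a * u ≤ M * |u| := by
      calc a * u ≤ |a * u| := le_abs_self _
        _ = |a| * |u| := abs_mul a u
        _ ≤ M * |u| := mul_le_mul_of_nonneg_right ha (abs_nonneg u)
    rw [sub_mul, hγodd.apply_mul_self_eq_apply_abs_mul_abs, hγ2 |u| ⟨hu, huN⟩]
    linarith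
  · rw [hsupp hNu, sub_zero]
    exact hγodd.apply_mul_self_nonneg hnn u

end Cutoff

lemma half_le_two_mul_div_add_one {x s c : ℝ} (hc : 0 < c) (hs : c ≤ s) (hx : -(c / 4) ≤ x) :
    1 / 2 ≤ 2 * (x / s) + 1 := by
  have hxs : -(1 / 4) ≤ x / s := by
    rw [le_div_iff₀ (hc.trans_le hs)]
    linarith
  linarith

theorem stmt7_general (α σ γ : ℝ → ℝ) (M N c δ : ℝ) (hM : 0 < M) (hc : 0 < c)
    (hαb : ∀ u, |α u| ≤ M) (hsupp : ∀ u : ℝ, N < |u| → α u = 0)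
    (hσ : ∀ u, c ≤ σ u ^ 2)
    (hδ : δ = c / (4 * M))
    (hγ1 : ∀ u ∈ Set.Icc (0:ℝ) δ, γ u = M * u / δ)
    (hγ2 : ∀ u ∈ Set.Icc δ N, γ u = M)
    (hγ3 : ∀ u ∈ Set.Icc N (N + 1), γ u = M * (N + 1 - u))
    (hγ4 : ∀ u : ℝ, N + 1 ≤ u → γ u = 0)
    (hγodd : ∀ u : ℝ, γ (-u) = -γ u) :
    ∀ᵐ u : ℝ ∂volume, 2 * ((γ u - α u) / σ u ^ 2) * u + 1 ≥ 1 / 2 := by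
  have hδ0 : 0 ≤ δ := by rw [hδ]; positivity
  have hMδ : M * δ = c / 4 := by rw [hδ]; field_simp
  have hγnn : ∀ v, 0 ≤ v → 0 ≤ γ v := fun v hv =>
    cutoff_nonneg hM.le hδ0 hγ1 hγ2 hγ3 hγ4 hv
  refine Filter.Eventually.of_forall fun u => ?_
  have hbound : -(c / 4) ≤ (γ u - α u) * u := hMδ ▸
    neg_mul_le_sub_mul_of_abs_le hδ0 (Function.Odd.apply_mul_self_nonneg hγodd hγnn u) (hαb u)
      (cutoff_sub_mul_nonneg hγodd hγnn hγ2 (hαb u) (hsupp u))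
  calc 2 * ((γ u - α u) / σ u ^ 2) * u + 1 = 2 * ((γ u - α u) * u / σ u ^ 2) + 1 := by ring
    _ ≥ 1 / 2 := half_le_two_mul_div_add_one hc (hσ u) hbound

/-- With `α` bounded by `M`, supported in `[−N,N]`, `σ² ≥ c > 0`, `δ = c/(4M)`,
and `γ` the odd piecewise-linear cutoff function of the construction, one has
`2((γ(u)−α(u))/σ(u)²)·u + 1 ≥ 1/2` for a.e. `u`. -/
theorem stmt7 (α σ γ : ℝ → ℝ) (M N c δ : ℝ) (hM : 0 < M) (hc : 0 < c)
    (hαm : Measurable α) (hαb : ∀ u, |α u| ≤ M) (hsupp : ∀ u : ℝ, N < |u| → α u = 0)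
    (hσ : ∀ u, c ≤ σ u ^ 2)
    (hδ : δ = c / (4 * M)) (hδN : δ ≤ N)
    (hγ1 : ∀ u ∈ Set.Icc (0:ℝ) δ, γ u = M * u / δ)
    (hγ2 : ∀ u ∈ Set.Icc δ N, γ u = M)
    (hγ3 : ∀ u ∈ Set.Icc N (N + 1), γ u = M * (N + 1 - u))
    (hγ4 : ∀ u : ℝ, N + 1 ≤ u → γ u = 0)
    (hγodd : ∀ u : ℝ, γ (-u) = -γ u) :
    ∀ᵐ u : ℝ ∂volume, 2 * ((γ u - α u) / σ u ^ 2) * u + 1 ≥ 1 / 2 :=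
  stmt7_general α σ γ M N c δ hM hc hαb hsupp hσ hδ hγ1 hγ2 hγ3 hγ4 hγodd
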